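/- arXiv:2011.08582 — 5 statements merged into one kernel-verified Lean document; each statement's English description precedes it below -/
import Mathlib

section
/- Let n and k be integers with n > k ≥ 2, and let a_1, a_2, ..., a_n and a be real numbers satisfying (∑_{i=1}^n a_i)^2 = (n - k + 1)(∑_{i=1}^n a_i^2 + a). Then 2∑_{1 ≤ i < j ≤ k} a_i a_j ≥ a. -/
/-!
Split `a₀, …, a_{n-1}` into the head `a₀, …, a_{k-1}`, with sum `s`, and the tail. Cauchy–Schwarz
applied to the `n - k + 1` numbers `s, a_k, …, a_{n-1}` bounds `(∑ aᵢ)²` by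
`(n - k + 1)(s² + ∑_{i ≥ k} aᵢ²)`. Comparing with the hypothesis and cancelling the positive factor
`n - k + 1` gives `A ≤ s² - ∑_{i < k} aᵢ²`, which is twice the sum of the products `aᵢ aⱼ`,
`i < j < k`.
-/

open Finset

theorem sq_sum_range_eq_sum_sq_add_two_mul_sum_Ioo {R : Type*} [CommSemiring R] (a : ℕ → R)
    (k : ℕ) :
    (∑ i ∈ range k, a i) ^ 2 =
      ∑ i ∈ range k, a i ^ 2 + 2 * ∑ i ∈ range k, ∑ j ∈ Ioo i k, a i * a j := by
  induction k with
  | zero => simp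
  | succ k ih =>
    have sum_Ioo_succ : ∀ i ∈ range k,
        ∑ j ∈ Ioo i (k + 1), a i * a j = ∑ j ∈ Ioo i k, a i * a j + a i * a k := by
      intro i hi
      rw [Ioo_add_one_right_eq_Ioc, ← Ioo_insert_right (mem_range.1 hi), sum_insert (by simp),
        add_comm]
    rw [sum_range_succ, sum_range_succ (fun i => a i ^ 2), sum_range_succ,
      Ioo_add_one_right_eq_Ioc, Ioc_self, sum_empty, sum_congr rfl sum_Ioo_succ, sum_add_distrib,
      ← sum_mul, add_sq, ih]
    ring

theorem sq_add_sum_le_card_add_one_mul {ι α : Type*} [Semiring α] [LinearOrder α]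
    [IsStrictOrderedRing α] [ExistsAddOfLE α] (s : Finset ι) (x : α) (f : ι → α) :
    (x + ∑ i ∈ s, f i) ^ 2 ≤ (#s + 1) * (x ^ 2 + ∑ i ∈ s, f i ^ 2) := by
  have h := sq_sum_le_card_mul_sum_sq (s := insertNone s) (f := fun i => i.elim x f)
  rwa [sum_insertNone, sum_insertNone, card_insertNone, Nat.cast_succ] at h

theorem chen_lemma_inequality_general (n k : ℕ) (hn : k < n)
    (a : ℕ → ℝ) (A : ℝ)
    (h : (∑ i ∈ Finset.range n, a i) ^ 2 =
        ((n : ℝ) - (k : ℝ) + 1) * (∑ i ∈ Finset.range n, (a i) ^ 2 + A)) :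
    2 * ∑ i ∈ Finset.range k, ∑ j ∈ Finset.Ioo i k, a i * a j ≥ A := by
  rw [← sum_range_add_sum_Ico _ hn.le, ← sum_range_add_sum_Ico _ hn.le] at h
  have cauchy_schwarz := sq_add_sum_le_card_add_one_mul (Ico k n) (∑ i ∈ range k, a i) a
  rw [Nat.card_Ico, Nat.cast_sub hn.le, h] at cauchy_schwarz
  have head_bound : ∑ i ∈ range k, a i ^ 2 + A ≤ (∑ i ∈ range k, a i) ^ 2 := by
    have pos : (0 : ℝ) < n - k + 1 := by
      linarith [(Nat.cast_lt (α := ℝ)).2 hn]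
    linarith [le_of_mul_le_mul_left cauchy_schwarz pos]
  linarith [sq_sum_range_eq_sum_sq_add_two_mul_sum_Ioo a k]

/-- Chen's algebraic lemma: if `(∑ aᵢ)² = (n - k + 1)(∑ aᵢ² + a)` with `n > k ≥ 2`,
then `2 ∑_{1 ≤ i < j ≤ k} aᵢ aⱼ ≥ a`.  (Indices are 0-based: `a 0, …, a (n-1)`.) -/
theorem chen_lemma_inequality (n k : ℕ) (hk : 2 ≤ k) (hn : k < n)
    (a : ℕ → ℝ) (A : ℝ)
    (h : (∑ i ∈ Finset.range n, a i) ^ 2 =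
        ((n : ℝ) - (k : ℝ) + 1) * (∑ i ∈ Finset.range n, (a i) ^ 2 + A)) :
    2 * ∑ i ∈ Finset.range k, ∑ j ∈ Finset.Ioo i k, a i * a j ≥ A :=
  chen_lemma_inequality_general n k hn a A h
end

section
/- Let n and k be integers with n > k ≥ 2, and let a_1, a_2, ..., a_n and a be real numbers satisfying (∑_{i=1}^n a_i)^2 = (n - k + 1)(∑_{i=1}^n a_i^2 + a). Then equality 2∑_{1 ≤ i < j ≤ k} a_i a_j = a holds if and only if a_1 + a_2 + ... + a_k = a_{k+1} = a_{k+2} = ... = a_n. -/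
/-!
Write `s = a₀ + ⋯ + a_{k-1}`. Since `s² = ∑_{i<k} aᵢ² + 2 ∑_{i<j<k} aᵢ aⱼ`, the hypothesis turns
the equality `2 ∑_{i<j<k} aᵢ aⱼ = A` into `(∑ bⱼ)² = (n - k + 1) ∑ bⱼ²` for the `n - k + 1` numbers
`b = (s, a_k, …, a_{n-1})`, whose sum is `∑ aᵢ`. This is the equality case of the Cauchy–Schwarz
inequality, which holds iff all the `bⱼ` are equal.
-/

open Finset

theorem sq_sum_range_eq_sum_sq_add_two_mul {R : Type*} [CommRing R] (a : ℕ → R) (k : ℕ) :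
    (∑ i ∈ range k, a i) ^ 2 =
      ∑ i ∈ range k, a i ^ 2 + 2 * ∑ i ∈ range k, ∑ j ∈ Ioo i k, a i * a j := by
  induction k with
  | zero => simp
  | succ k ih =>
    have h_inner : ∀ i ∈ range k,
        ∑ j ∈ Ioo i (k + 1), a i * a j = ∑ j ∈ Ioo i k, a i * a j + a i * a k := by
      intro i hi
      rw [Ioo_add_one_right_eq_Ioc, ← Ioo_insert_right (mem_range.1 hi),
        sum_insert (by simp), add_comm]
    rw [sum_range_succ, sum_range_succ, sum_range_succ, sum_congr rfl h_inner,
      Ioo_add_one_right_eq_Ioc, Ioc_self, sum_empty, sum_add_distrib, ← sum_mul]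
    linear_combination ih

theorem card_add_one_mul_sub_sq_add_sum_eq {ι R : Type*} [CommRing R] (t : Finset ι) (f : ι → R)
    (x : R) :
    (#t + 1) * (x ^ 2 + ∑ i ∈ t, f i ^ 2) - (x + ∑ i ∈ t, f i) ^ 2 =
      ∑ i ∈ t, (f i - x) ^ 2 + (#t * ∑ i ∈ t, f i ^ 2 - (∑ i ∈ t, f i) ^ 2) := by
  have h_expand :
      ∑ i ∈ t, (f i - x) ^ 2 = ∑ i ∈ t, f i ^ 2 - 2 * x * ∑ i ∈ t, f i + #t * x ^ 2 := by
    simp only [sub_sq, sum_add_distrib, sum_sub_distrib, sum_const, nsmul_eq_mul, ← sum_mul,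
      ← mul_sum]
    ring
  rw [h_expand]
  ring

theorem sq_add_sum_eq_card_add_one_mul_iff {ι R : Type*} [CommRing R] [LinearOrder R]
    [IsStrictOrderedRing R] (t : Finset ι) (f : ι → R) (x : R) :
    (x + ∑ i ∈ t, f i) ^ 2 = (#t + 1) * (x ^ 2 + ∑ i ∈ t, f i ^ 2) ↔ ∀ i ∈ t, f i = x := by
  constructor
  · intro h i hi
    have h_zero : ∑ i ∈ t, (f i - x) ^ 2 + (#t * ∑ i ∈ t, f i ^ 2 - (∑ i ∈ t, f i) ^ 2) = 0 := by
      rw [← card_add_one_mul_sub_sq_add_sum_eq, h, sub_self]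
    have h_sq_nonneg : ∀ i ∈ t, 0 ≤ (f i - x) ^ 2 := fun i _ => sq_nonneg _
    have h_sum_zero : ∑ i ∈ t, (f i - x) ^ 2 = 0 :=
      le_antisymm (by linarith [sq_sum_le_card_mul_sum_sq (s := t) (f := f)])
        (sum_nonneg h_sq_nonneg)
    exact sub_eq_zero.1 <| pow_eq_zero_iff two_ne_zero |>.1 <|
      (sum_eq_zero_iff_of_nonneg h_sq_nonneg).1 h_sum_zero i hi
  · intro h
    rw [sum_congr rfl h, sum_congr rfl fun i hi => congrArg (· ^ 2) (h i hi)]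
    simp only [sum_const, nsmul_eq_mul]
    ring

theorem chen_lemma_equality_general (n k : ℕ) (hn : k < n)
    (a : ℕ → ℝ) (A : ℝ)
    (h : (∑ i ∈ Finset.range n, a i) ^ 2 =
        ((n : ℝ) - (k : ℝ) + 1) * (∑ i ∈ Finset.range n, (a i) ^ 2 + A)) :
    2 * ∑ i ∈ Finset.range k, ∑ j ∈ Finset.Ioo i k, a i * a j = A ↔
      ∀ j, k ≤ j → j < n → a j = ∑ i ∈ Finset.range k, a i := by
  set s := ∑ i ∈ range k, a i
  have h_card : (#(Ico k n) : ℝ) + 1 = n - k + 1 := by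
    rw [Nat.card_Ico, Nat.cast_sub hn.le]
  have h_ne : (n : ℝ) - k + 1 ≠ 0 := by
    have : (k : ℝ) < n := by exact_mod_cast hn
    linarith
  simp only [← sum_range_add_sum_Ico _ hn.le] at h
  calc 2 * ∑ i ∈ range k, ∑ j ∈ Ioo i k, a i * a j = A
      ↔ (s + ∑ j ∈ Ico k n, a j) ^ 2 = (#(Ico k n) + 1) * (s ^ 2 + ∑ j ∈ Ico k n, a j ^ 2) := by
        rw [h, h_card, mul_right_inj' h_ne, sq_sum_range_eq_sum_sq_add_two_mul]
        constructor <;> intro <;> linarith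
    _ ↔ ∀ j ∈ Ico k n, a j = s := sq_add_sum_eq_card_add_one_mul_iff _ _ _
    _ ↔ ∀ j, k ≤ j → j < n → a j = s := by simp only [mem_Ico, and_imp]

/-- Equality case of Chen's algebraic lemma: with `n > k ≥ 2` and
`(∑ aᵢ)² = (n - k + 1)(∑ aᵢ² + a)`, the equality `2 ∑_{1 ≤ i < j ≤ k} aᵢ aⱼ = a` holds
iff `a₁ + ⋯ + a_k = a_{k+1} = ⋯ = a_n`.  (Indices are 0-based.) -/
theorem chen_lemma_equality (n k : ℕ) (hk : 2 ≤ k) (hn : k < n)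
    (a : ℕ → ℝ) (A : ℝ)
    (h : (∑ i ∈ Finset.range n, a i) ^ 2 =
        ((n : ℝ) - (k : ℝ) + 1) * (∑ i ∈ Finset.range n, (a i) ^ 2 + A)) :
    2 * ∑ i ∈ Finset.range k, ∑ j ∈ Finset.Ioo i k, a i * a j = A ↔
      ∀ j, k ≤ j → j < n → a j = ∑ i ∈ Finset.range k, a i :=
  chen_lemma_equality_general n k hn a A h
end

section
/- Let n ≥ 2 be an integer, r > 0 a real number, and (b_{ij})_{1 ≤ i,j ≤ n} a symmetric array of real numbers (b_{ij} = b_{ji}). Then (∑_{i=1}^n b_{ii})^2 ≤ ((n + r)/n) ∑_{i,j=1}^n b_{ij}^2 + ((n + r)(n^2 − n − r)/(r n)) ∑_{i,j=1}^{n−1} b_{ij}^2. -/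
/-!
Split off the last index and write `s` for the sum of the first `n - 1` diagonal entries and
`t = bₙₙ`. Dropping the off-diagonal entries of the last row and column bounds the full sum of
squares `Qₙ` below by `Qₙ₋₁ + t²`; after this substitution the two coefficients of `Qₙ₋₁`
combine into `(n + r)(n - 1)/r ≥ 0`, and Cauchy–Schwarz gives `(n - 1) Qₙ₋₁ ≥ s²`. What remains,
`(s + t)² ≤ (n + r)(s²/r + t²/n)`, is the two-term case of Sedrakyan's lemma.
-/

open Finset

theorem add_sq_le_add_mul_sq_div_add_sq_div {K : Type*} [Field K] [LinearOrder K]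
    [IsStrictOrderedRing K] {a b : K} (ha : 0 < a) (hb : 0 < b) (x y : K) :
    (x + y) ^ 2 ≤ (a + b) * (x ^ 2 / a + y ^ 2 / b) := by
  rw [div_add_div _ _ ha.ne' hb.ne', mul_div_assoc', le_div_iff₀ (by positivity)]
  nlinarith [sq_nonneg (b * x - a * y)]

theorem sum_range_sum_range_add_le_sum_range_succ_sum_range_succ {M : Type*} [AddCommMonoid M]
    [PartialOrder M] [IsOrderedAddMonoid M] {f : ℕ → ℕ → M} (hf : ∀ i j, 0 ≤ f i j) (k : ℕ) :
    ∑ i ∈ range k, ∑ j ∈ range k, f i j + f k k ≤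
      ∑ i ∈ range (k + 1), ∑ j ∈ range (k + 1), f i j := by
  simp only [sum_range_succ _ k, sum_add_distrib]
  exact add_le_add (le_add_of_nonneg_right (sum_nonneg fun i _ ↦ hf i k))
    (le_add_of_nonneg_left (sum_nonneg fun j _ ↦ hf k j))

theorem sq_sum_diag_le_card_mul_sum_sq {ι R : Type*} [Semiring R] [LinearOrder R]
    [IsStrictOrderedRing R] [ExistsAddOfLE R] (s : Finset ι) (b : ι → ι → R) :
    (∑ i ∈ s, b i i) ^ 2 ≤ #s * ∑ i ∈ s, ∑ j ∈ s, b i j ^ 2 :=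
  (sq_sum_le_card_mul_sum_sq (s := s) (f := fun i ↦ b i i)).trans <| by
    gcongr with i hi
    exact single_le_sum (fun j _ ↦ sq_nonneg (b i j)) hi

theorem casorati_key_inequality_general (n : ℕ) (r : ℝ) (hr : 0 < r)
    (b : ℕ → ℕ → ℝ) :
    (∑ i ∈ Finset.range n, b i i) ^ 2 ≤
      (((n : ℝ) + r) / n) * ∑ i ∈ Finset.range n, ∑ j ∈ Finset.range n, (b i j) ^ 2 +
        (((n : ℝ) + r) * ((n : ℝ) ^ 2 - n - r) / (r * n)) *
          ∑ i ∈ Finset.range (n - 1), ∑ j ∈ Finset.range (n - 1), (b i j) ^ 2 := by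
  cases n with
  | zero => simp
  | succ k =>
    rw [sum_range_succ, Nat.add_sub_cancel]
    push_cast
    have hQ := sum_range_sum_range_add_le_sum_range_succ_sum_range_succ
      (f := fun i j ↦ b i j ^ 2) (fun _ _ ↦ sq_nonneg _) k
    have hs := sq_sum_diag_le_card_mul_sum_sq (range k) b
    rw [card_range] at hs
    set Q := ∑ i ∈ range k, ∑ j ∈ range k, b i j ^ 2
    set s := ∑ i ∈ range k, b i i
    set t := b k k
    calc (s + t) ^ 2 ≤ (r + (k + 1)) * (s ^ 2 / r + t ^ 2 / (k + 1)) :=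
          add_sq_le_add_mul_sq_div_add_sq_div hr (by positivity) s t
      _ = (k + 1 + r) / r * s ^ 2 + (k + 1 + r) / (k + 1) * t ^ 2 := by ring
      _ ≤ (k + 1 + r) / r * (k * Q) + (k + 1 + r) / (k + 1) * t ^ 2 := by gcongr
      _ = (k + 1 + r) / (k + 1) * (Q + t ^ 2) +
            (k + 1 + r) * ((k + 1) ^ 2 - (k + 1) - r) / (r * (k + 1)) * Q := by
          field_simp
          ring
      _ ≤ _ := by gcongr

/-- Key quadratic inequality underlying the generalized normalized δ-Casorati
curvature inequality: for a symmetric `n × n` array `b` and `r > 0`,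
`(∑ bᵢᵢ)² ≤ ((n+r)/n) ∑_{i,j=1}^n bᵢⱼ² + ((n+r)(n²-n-r)/(rn)) ∑_{i,j=1}^{n-1} bᵢⱼ²`.
(Indices are 0-based: entries `b i j` with `i, j < n`.) -/
theorem casorati_key_inequality (n : ℕ) (hn : 2 ≤ n) (r : ℝ) (hr : 0 < r)
    (b : ℕ → ℕ → ℝ) (hsymm : ∀ i j, b i j = b j i) :
    (∑ i ∈ Finset.range n, b i i) ^ 2 ≤
      (((n : ℝ) + r) / n) * ∑ i ∈ Finset.range n, ∑ j ∈ Finset.range n, (b i j) ^ 2 +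
        (((n : ℝ) + r) * ((n : ℝ) ^ 2 - n - r) / (r * n)) *
          ∑ i ∈ Finset.range (n - 1), ∑ j ∈ Finset.range (n - 1), (b i j) ^ 2 :=
  casorati_key_inequality_general n r hr b
end

section
/- Let n ≥ 2 be an integer, r > 0 a real number, and (b_{ij})_{1 ≤ i,j ≤ n} a symmetric array of real numbers (b_{ij} = b_{ji}). Equality (∑_{i=1}^n b_{ii})^2 = ((n + r)/n) ∑_{i,j=1}^n b_{ij}^2 + ((n + r)(n^2 − n − r)/(r n)) ∑_{i,j=1}^{n−1} b_{ij}^2 holds if and only if b_{ij} = 0 for all i ≠ j, b_{11} = b_{22} = ... = b_{n−1,n−1}, and b_{nn} = (n(n − 1)/r) · b_{11}. -/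
/-!
Put `β = (n + r) / n` and `α = (n + r)(n - 1) / r`, the sum of the two coefficients of the
right-hand side. Splitting off the last row and column of `b` and the diagonal of the leading
`(n - 1) × (n - 1)` block, the right-hand side minus `(∑ bᵢᵢ)²` becomes
`2β ∑_{i<n} bᵢₙ² + α ∑_{i≠j<n} bᵢⱼ² + (∑ cᵢ bᵢᵢ² - (∑ bᵢᵢ)²)` with weights `cᵢ = α` for `i < n`
and `cₙ = β`. These satisfy `∑ 1/cᵢ = 1`, so the last bracket is the weighted Cauchy–Schwarz
defect `∑ cᵢ (bᵢᵢ - t/cᵢ)²`, `t = ∑ bᵢᵢ`, which vanishes iff `bᵢᵢ` is proportional to `1/cᵢ`.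
Equality thus forces all off-diagonal entries to vanish, `b₁₁ = ⋯ = bₙ₋₁,ₙ₋₁` and
`bₙₙ = (α/β) b₁₁ = (n(n-1)/r) b₁₁`.
-/

open Finset

section WeightedCauchySchwarz

variable {ι K : Type*} [Field K] {s : Finset ι} {c : ι → K}

theorem sum_mul_sq_sub_sq_sum (hc : ∀ i ∈ s, c i ≠ 0) (hs : ∑ i ∈ s, (c i)⁻¹ = 1) (z : ι → K) :
    ∑ i ∈ s, c i * z i ^ 2 - (∑ i ∈ s, z i) ^ 2 =
      ∑ i ∈ s, c i * (z i - (∑ j ∈ s, z j) / c i) ^ 2 := by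
  set t := ∑ j ∈ s, z j
  have expand : ∀ i ∈ s,
      c i * (z i - t / c i) ^ 2 = c i * z i ^ 2 - 2 * t * z i + t ^ 2 * (c i)⁻¹ := by
    intro i hi
    field_simp [hc i hi]
    ring
  rw [sum_congr rfl expand, sum_add_distrib, sum_sub_distrib, ← mul_sum, ← mul_sum, hs]
  ring

variable [LinearOrder K] [IsStrictOrderedRing K]

theorem sq_sum_le_sum_mul_sq (hc : ∀ i ∈ s, 0 < c i) (hs : ∑ i ∈ s, (c i)⁻¹ = 1) (z : ι → K) :
    (∑ i ∈ s, z i) ^ 2 ≤ ∑ i ∈ s, c i * z i ^ 2 := by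
  rw [← sub_nonneg, sum_mul_sq_sub_sq_sum (fun i hi => (hc i hi).ne') hs]
  exact sum_nonneg fun i hi => mul_nonneg (hc i hi).le (sq_nonneg _)

theorem sum_mul_sq_eq_sq_sum_iff (hc : ∀ i ∈ s, 0 < c i) (hs : ∑ i ∈ s, (c i)⁻¹ = 1)
    (z : ι → K) :
    ∑ i ∈ s, c i * z i ^ 2 = (∑ i ∈ s, z i) ^ 2 ↔ ∃ k, ∀ i ∈ s, z i = k / c i := by
  rw [← sub_eq_zero, sum_mul_sq_sub_sq_sum (fun i hi => (hc i hi).ne') hs,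
    sum_eq_zero_iff_of_nonneg fun i hi => mul_nonneg (hc i hi).le (sq_nonneg _)]
  constructor
  · intro h
    refine ⟨∑ j ∈ s, z j, fun i hi => ?_⟩
    simpa [(hc i hi).ne', sub_eq_zero] using h i hi
  · rintro ⟨k, hk⟩ i hi
    have hsum : ∑ j ∈ s, z j = k := by
      simp only [sum_congr rfl hk, div_eq_mul_inv, ← mul_sum, hs, mul_one]
    simp [hk i hi, hsum]

end WeightedCauchySchwarz

theorem sum_sum_eq_sum_diag_add_sum_sum_erase {ι M : Type*} [DecidableEq ι] [AddCommMonoid M]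
    (s : Finset ι) (f : ι → ι → M) :
    ∑ i ∈ s, ∑ j ∈ s, f i j = ∑ i ∈ s, f i i + ∑ i ∈ s, ∑ j ∈ s.erase i, f i j := by
  rw [← sum_add_distrib]
  exact sum_congr rfl fun i hi => (add_sum_erase s (f i) hi).symm

section SumOfSquares

variable {ι κ R : Type*} [Semiring R] [LinearOrder R] [IsStrictOrderedRing R] [ExistsAddOfLE R]

theorem sum_sq_eq_zero_iff (s : Finset ι) (f : ι → R) :
    ∑ i ∈ s, f i ^ 2 = 0 ↔ ∀ i ∈ s, f i = 0 := by
  simp only [sq, sum_mul_self_eq_zero_iff]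

theorem sum_sum_sq_eq_zero_iff (s : Finset ι) (t : ι → Finset κ) (f : ι → κ → R) :
    ∑ i ∈ s, ∑ j ∈ t i, f i j ^ 2 = 0 ↔ ∀ i ∈ s, ∀ j ∈ t i, f i j = 0 := by
  rw [sum_eq_zero_iff_of_nonneg fun i _ => sum_nonneg fun j _ => sq_nonneg (f i j)]
  simp only [sum_sq_eq_zero_iff]

end SumOfSquares

section SymmetricArray

variable {b : ℕ → ℕ → ℝ}

theorem sum_sum_range_succ_sq_of_symm (hsymm : ∀ i j, b i j = b j i) (m : ℕ) :
    ∑ i ∈ range (m + 1), ∑ j ∈ range (m + 1), b i j ^ 2 =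
      ∑ i ∈ range m, ∑ j ∈ range m, b i j ^ 2 + 2 * ∑ i ∈ range m, b i m ^ 2 + b m m ^ 2 := by
  simp only [sum_range_succ, sum_add_distrib, hsymm m]
  ring

theorem mul_sum_sum_sq_add_mul_sum_sum_sq_of_symm (hsymm : ∀ i j, b i j = b j i) (m : ℕ)
    (β γ : ℝ) :
    β * ∑ i ∈ range (m + 1), ∑ j ∈ range (m + 1), b i j ^ 2 +
        γ * ∑ i ∈ range m, ∑ j ∈ range m, b i j ^ 2 =
      2 * β * ∑ i ∈ range m, b i m ^ 2 +
        (β + γ) * ∑ i ∈ range m, ∑ j ∈ (range m).erase i, b i j ^ 2 +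
        ∑ i ∈ range (m + 1), (if i = m then β else β + γ) * b i i ^ 2 := by
  have hlast : ∑ i ∈ range (m + 1), (if i = m then β else β + γ) * b i i ^ 2 =
      (β + γ) * ∑ i ∈ range m, b i i ^ 2 + β * b m m ^ 2 := by
    rw [sum_range_succ, if_pos rfl, mul_sum]
    congr 1
    exact sum_congr rfl fun i hi => by rw [if_neg (mem_range.1 hi).ne]
  rw [hlast, sum_sum_range_succ_sq_of_symm hsymm, sum_sum_eq_sum_diag_add_sum_sum_erase]
  ring

theorem forall_offDiag_eq_zero_iff (hsymm : ∀ i j, b i j = b j i) (m : ℕ) :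
    (∀ i j, i < m + 1 → j < m + 1 → i ≠ j → b i j = 0) ↔
      (∀ i ∈ range m, b i m = 0) ∧ ∀ i ∈ range m, ∀ j ∈ (range m).erase i, b i j = 0 := by
  simp only [mem_range, mem_erase]
  refine ⟨fun h => ⟨fun i hi => h i m (by omega) (by omega) hi.ne,
    fun i hi j ⟨hji, hj⟩ => h i j (by omega) (by omega) (Ne.symm hji)⟩, ?_⟩
  rintro ⟨hlast, hinner⟩ i j hi hj hij
  rcases Nat.lt_succ_iff_lt_or_eq.1 hi with hi | rfl
  · rcases Nat.lt_succ_iff_lt_or_eq.1 hj with hj | rfl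
    · exact hinner i hi j ⟨Ne.symm hij, hj⟩
    · exact hlast i hi
  · rw [hsymm]
    exact hlast j (by omega)

end SymmetricArray

theorem exists_forall_eq_div_ite_iff {m : ℕ} (hm : 0 < m) {α : ℝ} (hα : α ≠ 0) (β : ℝ)
    (z : ℕ → ℝ) :
    (∃ k, ∀ i ∈ range (m + 1), z i = k / if i = m then β else α) ↔
      (∀ i < m, z i = z 0) ∧ z m = α / β * z 0 := by
  simp only [mem_range, Nat.lt_succ_iff_lt_or_eq, or_imp, forall_and, forall_eq, ↓reduceIte]
  constructor
  · rintro ⟨k, hinit, hm'⟩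
    have hk : ∀ i < m, z i = k / α := fun i hi => by rw [hinit i hi, if_neg hi.ne]
    have h0 := hk 0 hm
    refine ⟨fun i hi => by rw [hk i hi, h0], ?_⟩
    rw [hm', h0]
    field_simp
  · rintro ⟨hinit, hm'⟩
    refine ⟨α * z 0, fun i hi => ?_, ?_⟩
    · rw [if_neg hi.ne, hinit i hi]
      field_simp
    · rw [hm']
      ring

/-- Indices are 0-based: `b 0 0` is `b₁₁` and `b (n-1) (n-1)` is `bₙₙ`. -/
theorem casorati_key_equality (n : ℕ) (hn : 2 ≤ n) (r : ℝ) (hr : 0 < r)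
    (b : ℕ → ℕ → ℝ) (hsymm : ∀ i j, b i j = b j i) :
    (∑ i ∈ Finset.range n, b i i) ^ 2 =
      (((n : ℝ) + r) / n) * ∑ i ∈ Finset.range n, ∑ j ∈ Finset.range n, (b i j) ^ 2 +
        (((n : ℝ) + r) * ((n : ℝ) ^ 2 - n - r) / (r * n)) *
          ∑ i ∈ Finset.range (n - 1), ∑ j ∈ Finset.range (n - 1), (b i j) ^ 2 ↔
      (∀ i j, i < n → j < n → i ≠ j → b i j = 0) ∧
        (∀ i, i < n - 1 → b i i = b 0 0) ∧
        b (n - 1) (n - 1) = ((n : ℝ) * ((n : ℝ) - 1) / r) * b 0 0 := by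
  obtain ⟨m, rfl⟩ : ∃ m, n = m + 1 := ⟨n - 1, by omega⟩
  have hm : 0 < m := by omega
  simp only [Nat.add_sub_cancel]
  push_cast
  set β : ℝ := (m + 1 + r) / (m + 1)
  set γ : ℝ := (m + 1 + r) * ((m + 1) ^ 2 - (m + 1) - r) / (r * (m + 1))
  have hβ : 0 < β := by positivity
  have hα : β + γ = (m + 1 + r) * m / r := by simp only [β, γ]; field_simp; ring
  have hα_pos : 0 < β + γ := by rw [hα]; positivity
  have hc_pos : ∀ i ∈ range (m + 1), 0 < if i = m then β else β + γ := fun i _ => by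
    split_ifs <;> assumption
  have hc_inv : ∑ i ∈ range (m + 1), (if i = m then β else β + γ)⁻¹ = 1 := by
    rw [sum_range_succ, if_pos rfl, sum_congr rfl fun i hi => by rw [if_neg (mem_range.1 hi).ne],
      sum_const, card_range, nsmul_eq_mul, hα]
    simp only [β]
    field_simp
    ring
  rw [eq_comm, ← sub_eq_zero, mul_sum_sum_sq_add_mul_sum_sum_sq_of_symm hsymm, add_sub_assoc,
    add_eq_zero_iff_of_nonneg (by positivity) (sub_nonneg.2 (sq_sum_le_sum_mul_sq hc_pos hc_inv _)),
    add_eq_zero_iff_of_nonneg (by positivity) (by positivity), sub_eq_zero,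
    sum_mul_sq_eq_sq_sum_iff hc_pos hc_inv, exists_forall_eq_div_ite_iff hm hα_pos.ne',
    forall_offDiag_eq_zero_iff hsymm]
  have hratio : (β + γ) / β = (m + 1) * (m + 1 - 1) / r := by
    rw [hα]; simp only [β]; field_simp; ring
  simp only [mul_eq_zero, hβ.ne', hα_pos.ne', two_ne_zero, false_or, sum_sq_eq_zero_iff,
    sum_sum_sq_eq_zero_iff, hratio]
end

section
/- Let n ≥ 2 be an integer and r > 0 a real number. Define the n×n real symmetric matrix H_1 by (H_1)_{ii} = 2(n−1)(n+r)/r − 2 for 1 ≤ i ≤ n−1, (H_1)_{nn} = 2r/n, and (H_1)_{ij} = −2 for all i ≠ j. Then H_1 is positive semidefinite. -/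
/-!
Writing `J` for the all-ones matrix, `H₁ = diag(c) - 2 J` with `cᵢ = 2(n-1)(n+r)/r` for `i ≤ n-1`
and `cₙ = 2(n+r)/n`. By Cauchy–Schwarz, `(∑ xᵢ)² ≤ (∑ 1/cᵢ) (∑ cᵢ xᵢ²)`, so `diag(c) - s J` is
positive semidefinite as soon as `s ∑ 1/cᵢ ≤ 1`, and here `2 ∑ 1/cᵢ = r/(n+r) + n/(n+r) = 1`.
-/

open Finset Matrix

section DiagonalSubConst

variable {ι : Type*} [Fintype ι]

theorem sq_sum_le_sum_inv_mul_sum_mul_sq {d : ι → ℝ} (hd : ∀ i, 0 < d i) (x : ι → ℝ) :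
    (∑ i, x i) ^ 2 ≤ (∑ i, (d i)⁻¹) * ∑ i, d i * x i ^ 2 :=
  sum_sq_le_sum_mul_sum_of_sq_le_mul _ (fun i _ => (inv_pos.2 (hd i)).le)
    (fun i _ => mul_nonneg (hd i).le (sq_nonneg _))
    (fun i _ => by rw [inv_mul_cancel_left₀ (hd i).ne'])

theorem Matrix.dotProduct_diagonal_sub_const_mulVec [DecidableEq ι] {R : Type*} [CommRing R]
    (d : ι → R) (s : R) (x : ι → R) :
    x ⬝ᵥ ((diagonal d - of fun _ _ => s) *ᵥ x) = ∑ i, d i * x i ^ 2 - s * (∑ i, x i) ^ 2 := by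
  rw [sub_mulVec, dotProduct_sub]
  congr 1
  · exact sum_congr rfl fun i _ => by rw [mulVec_diagonal]; ring
  · simp only [dotProduct, mulVec, of_apply, ← mul_sum, ← sum_mul]
    ring

theorem Matrix.posSemidef_diagonal_sub_const [DecidableEq ι] {d : ι → ℝ} (hd : ∀ i, 0 < d i)
    {s : ℝ} (hs : s * ∑ i, (d i)⁻¹ ≤ 1) : (diagonal d - of fun _ _ => s).PosSemidef := by
  refine .of_dotProduct_mulVec_nonneg ((isHermitian_diagonal d).sub (by ext; simp)) fun x => ?_
  rw [star_trivial, dotProduct_diagonal_sub_const_mulVec, sub_nonneg]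
  have hcs := sq_sum_le_sum_inv_mul_sum_mul_sq hd x
  have hq : 0 ≤ ∑ i, d i * x i ^ 2 := sum_nonneg fun i _ => mul_nonneg (hd i).le (sq_nonneg _)
  rcases le_or_gt s 0 with hs0 | hs0
  · nlinarith [sq_nonneg (∑ i, x i)]
  · calc s * (∑ i, x i) ^ 2 ≤ s * ((∑ i, (d i)⁻¹) * ∑ i, d i * x i ^ 2) := by gcongr
      _ = (s * ∑ i, (d i)⁻¹) * ∑ i, d i * x i ^ 2 := by ring
      _ ≤ ∑ i, d i * x i ^ 2 := mul_le_of_le_one_left hq hs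

end DiagonalSubConst

section H1

variable (n : ℕ) (r : ℝ)

noncomputable def H1 : Matrix (Fin n) (Fin n) ℝ :=
  of fun i j =>
    if i = j then
      (if (i : ℕ) < n - 1 then 2 * ((n : ℝ) - 1) * ((n : ℝ) + r) / r - 2 else 2 * r / n)
    else -2

noncomputable def H1Weight (i : Fin n) : ℝ :=
  if (i : ℕ) < n - 1 then 2 * ((n : ℝ) - 1) * ((n : ℝ) + r) / r else 2 * r / n + 2

theorem H1_eq_diagonal_sub_const : H1 n r = diagonal (H1Weight n r) - of fun _ _ => 2 := by
  ext i j
  by_cases h : i = j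
  · subst h
    simp only [H1, H1Weight, of_apply, if_true, Matrix.sub_apply, diagonal_apply_eq]
    split_ifs <;> ring
  · simp [H1, h]

variable {r}

theorem H1Weight_pos (hr : 0 < r) (i : Fin n) : 0 < H1Weight n r i := by
  unfold H1Weight
  split_ifs with hi
  · have : (1 : ℝ) < n := by exact_mod_cast (by omega : 1 < n)
    have : 0 < (n : ℝ) - 1 := by linarith
    positivity
  · positivity

theorem two_mul_sum_inv_H1Weight_le_one (hr : 0 < r) : 2 * ∑ i, (H1Weight n r i)⁻¹ ≤ 1 := by
  cases n with
  | zero => simp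
  | succ m =>
    simp only [Fin.sum_univ_castSucc, H1Weight, Fin.val_castSucc, Fin.val_last, Nat.add_sub_cancel,
      Fin.is_lt, if_true, lt_irrefl, if_false, sum_const, card_univ, Fintype.card_fin, nsmul_eq_mul]
    push_cast
    rw [add_sub_cancel_right]
    rcases m.eq_zero_or_pos with rfl | hm
    · rw [CharP.cast_eq_zero, zero_mul, zero_add, zero_add, div_one, ← div_eq_mul_inv,
        div_le_one (by positivity)]
      linarith
    · have : (0 : ℝ) < m := by exact_mod_cast hm
      apply le_of_eq
      field_simp
      ring

end H1

theorem H1_posSemidef_general (n : ℕ) (r : ℝ) (hr : 0 < r) :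
    Matrix.PosSemidef (Matrix.of fun i j : Fin n =>
      if i = j then
        (if (i : ℕ) < n - 1 then 2 * ((n : ℝ) - 1) * ((n : ℝ) + r) / r - 2
         else 2 * r / n)
      else (-2 : ℝ)) := by
  change (H1 n r).PosSemidef
  rw [H1_eq_diagonal_sub_const]
  exact posSemidef_diagonal_sub_const (H1Weight_pos n hr) (two_mul_sum_inv_H1Weight_le_one n hr)

/-- The Hessian block `H₁` (equation (87)) is positive semidefinite:
`(H₁)ᵢᵢ = 2(n-1)(n+r)/r - 2` for `i ≤ n-1`, `(H₁)ₙₙ = 2r/n`, and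
`(H₁)ᵢⱼ = -2` off the diagonal.  (Indices are 0-based: the last index is `n-1`.) -/
theorem H1_posSemidef (n : ℕ) (hn : 2 ≤ n) (r : ℝ) (hr : 0 < r) :
    Matrix.PosSemidef (Matrix.of fun i j : Fin n =>
      if i = j then
        (if (i : ℕ) < n - 1 then 2 * ((n : ℝ) - 1) * ((n : ℝ) + r) / r - 2
         else 2 * r / n)
      else (-2 : ℝ)) :=
  H1_posSemidef_general n r hr
end
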